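/- arXiv:1611.05608 — 3 statements merged into one kernel-verified Lean document; each statement's English description precedes it below -/
import Mathlib

section
/- Let f₁,…,fₙ : ℝ → ℝ be smooth, A = (a_{ij}) an invertible n×n real matrix, and z(x) = Σᵢ fᵢ((Ax)ᵢ). If the Gauss–Kronecker curvature K(x) = det(Hess(z)(x)) / (1 + Σᵢ (∂z/∂xᵢ)²)^{(n+2)/2} is a constant K₀ on ℝⁿ, then K₀ = 0. -/
noncomputable def hessian {n : ℕ} (f : (Fin n → ℝ) → ℝ) (x : Fin n → ℝ) :
    Matrix (Fin n) (Fin n) ℝ :=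
  fun i j => fderiv ℝ (fun y => fderiv ℝ f y (Pi.single j 1)) x (Pi.single i 1)

open Matrix Finset
open Matrix Finset

variable {n : ℕ}

noncomputable def Lmap (A : Matrix (Fin n) (Fin n) ℝ) (i : Fin n) : (Fin n → ℝ) →L[ℝ] ℝ :=
  LinearMap.toContinuousLinearMap ((LinearMap.proj i).comp A.mulVecLin)

lemma Lmap_apply (A : Matrix (Fin n) (Fin n) ℝ) (i : Fin n) (x : Fin n → ℝ) :
    Lmap A i x = A.mulVec x i := rfl

lemma Lmap_single (A : Matrix (Fin n) (Fin n) ℝ) (i j : Fin n) :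
    Lmap A i (Pi.single j 1) = A i j := by
  rw [Lmap_apply, Matrix.mulVec_single]; exact mul_one _

lemma hasFDerivAt_z (f : Fin n → ℝ → ℝ) (hf : ∀ i, ContDiff ℝ (⊤ : ℕ∞) (f i))
    (A : Matrix (Fin n) (Fin n) ℝ) (x : Fin n → ℝ) :
    HasFDerivAt (fun x => ∑ i, f i (A.mulVec x i))
      (∑ i, deriv (f i) (A.mulVec x i) • Lmap A i) x := by
  apply HasFDerivAt.fun_sum
  intro i _
  exact ((hf i).differentiable (by simp) (A.mulVec x i)).hasDerivAt.comp_hasFDerivAt x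
    (Lmap A i).hasFDerivAt

lemma fderiv_z_single (f : Fin n → ℝ → ℝ) (hf : ∀ i, ContDiff ℝ (⊤ : ℕ∞) (f i))
    (A : Matrix (Fin n) (Fin n) ℝ) (x : Fin n → ℝ) (j : Fin n) :
    fderiv ℝ (fun x => ∑ i, f i (A.mulVec x i)) x (Pi.single j 1)
      = ∑ i, deriv (f i) (A.mulVec x i) * A i j := by
  rw [(hasFDerivAt_z f hf A x).fderiv]
  simp [Lmap_single, ContinuousLinearMap.sum_apply]

lemma hasFDerivAt_grad (f : Fin n → ℝ → ℝ) (hf : ∀ i, ContDiff ℝ (⊤ : ℕ∞) (f i))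
    (A : Matrix (Fin n) (Fin n) ℝ) (x : Fin n → ℝ) (j : Fin n) :
    HasFDerivAt (fun y => ∑ i, deriv (f i) (A.mulVec y i) * A i j)
      (∑ i, (A i j * deriv (deriv (f i)) (A.mulVec x i)) • Lmap A i) x := by
  apply HasFDerivAt.fun_sum
  intro i _
  have hd := (contDiff_infty_iff_deriv.mp ((hf i).of_le (by simp))).2
  have h1 : HasFDerivAt (fun y => deriv (f i) (A.mulVec y i))
      (deriv (deriv (f i)) (A.mulVec x i) • Lmap A i) x := by
    have := (hd.differentiable (by simp) (A.mulVec x i)).hasDerivAt.comp_hasFDerivAt x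
      (Lmap A i).hasFDerivAt
    exact this
  have := h1.mul_const (A i j)
  rw [smul_smul] at this
  exact this

lemma hessian_z (f : Fin n → ℝ → ℝ) (hf : ∀ i, ContDiff ℝ (⊤ : ℕ∞) (f i))
    (A : Matrix (Fin n) (Fin n) ℝ) (x : Fin n → ℝ) (i j : Fin n) :
    hessian (fun x => ∑ i, f i (A.mulVec x i)) x i j
      = ∑ k, deriv (deriv (f k)) (A.mulVec x k) * A k i * A k j := by
  unfold hessian
  have hfun : (fun y => fderiv ℝ (fun x => ∑ i, f i (A.mulVec x i)) y (Pi.single j 1))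
      = fun y => ∑ i, deriv (f i) (A.mulVec y i) * A i j := by
    funext y; exact fderiv_z_single f hf A y j
  rw [hfun, (hasFDerivAt_grad f hf A x j).fderiv]
  simp [Lmap_single, ContinuousLinearMap.sum_apply]
  exact Finset.sum_congr rfl fun k _ => by ring

lemma det_hessian_z (f : Fin n → ℝ → ℝ) (hf : ∀ i, ContDiff ℝ (⊤ : ℕ∞) (f i))
    (A : Matrix (Fin n) (Fin n) ℝ) (x : Fin n → ℝ) :
    (hessian (fun x => ∑ i, f i (A.mulVec x i)) x).det
      = A.det ^ 2 * ∏ k, deriv (deriv (f k)) (A.mulVec x k) := by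
  have : hessian (fun x => ∑ i, f i (A.mulVec x i)) x
      = Aᵀ * (Matrix.diagonal (fun k => deriv (deriv (f k)) (A.mulVec x k)) * A) := by
    ext i j
    rw [hessian_z f hf A x i j, Matrix.mul_apply]
    apply Finset.sum_congr rfl
    intro k _
    rw [Matrix.mul_apply, Matrix.transpose_apply]
    rw [Finset.sum_eq_single k]
    · simp [Matrix.diagonal]; ring
    · intro b _ hb; simp [Matrix.diagonal_apply_ne' _ hb]
    · simp
  rw [this, Matrix.det_mul, Matrix.det_mul, Matrix.det_transpose, Matrix.det_diagonal]
  ring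

lemma quad3 {c0 c1 c2 s1 s2 s3 : ℝ} (h12 : s1 ≠ s2) (h13 : s1 ≠ s3) (h23 : s2 ≠ s3)
    (h1 : c0 + c1*s1 + c2*s1^2 = 0) (h2 : c0 + c1*s2 + c2*s2^2 = 0)
    (h3 : c0 + c1*s3 + c2*s3^2 = 0) : c2 = 0 ∧ c1 = 0 ∧ c0 = 0 := by
  have d1 : (s1 - s2) * (c1 + c2*(s1+s2)) = 0 := by linear_combination h1 - h2
  have d2 : (s1 - s3) * (c1 + c2*(s1+s3)) = 0 := by linear_combination h1 - h3
  have e1 : c1 + c2*(s1+s2) = 0 :=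
    (mul_eq_zero.mp d1).resolve_left (sub_ne_zero.mpr h12)
  have e2 : c1 + c2*(s1+s3) = 0 :=
    (mul_eq_zero.mp d2).resolve_left (sub_ne_zero.mpr h13)
  have d3 : c2 * (s2 - s3) = 0 := by linear_combination e1 - e2
  have hc2 : c2 = 0 := (mul_eq_zero.mp d3).resolve_right (sub_ne_zero.mpr h23)
  have hc1 : c1 = 0 := by linear_combination e1 - (s1+s2) * hc2
  refine ⟨hc2, hc1, by linear_combination h1 - s1 * hc1 - s1^2 * hc2⟩

lemma sep_contra (e P R X Y Z : ℝ) (hX : 0 < X) (hY : 0 < Y)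
    (g k : ℝ → ℝ) (hg : Function.Injective g) (hk : Function.Injective k)
    (Q : ℝ → ℝ → ℝ)
    (hQ : ∀ t s, Q t s = e + 2*P*t + 2*R*s + X*t^2 + Y*s^2 + 2*Z*(t*s))
    (hpos : ∀ t s, 0 < Q t s)
    (hrel : ∀ a a' b b', Q (g a) (k b) * Q (g a') (k b')
        = Q (g a) (k b') * Q (g a') (k b)) :
    False := by
  have key : ∀ a a' : ℝ, a ≠ a' → 2*P + X*(g a + g a') = 0 := by
    intro a a' haa
    set t := g a with ht
    set t' := g a' with ht'
    have htt : t ≠ t' := fun h => haa (hg h)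
    set K1 := e + 2*P*t + 2*R*(k 0) + X*t^2 + Y*(k 0)^2 + 2*Z*(t*(k 0)) with hK1
    set K2 := e + 2*P*t' + 2*R*(k 0) + X*t'^2 + Y*(k 0)^2 + 2*Z*(t'*(k 0)) with hK2
    have hK1pos : 0 < K1 := by rw [hK1, ← hQ]; exact hpos t (k 0)
    set c2 := Y*(K2 - K1) with hc2def
    set c1 := 2*R*(K2-K1) + 2*Z*(t*K2 - t'*K1) with hc1def
    set c0 := K2*(e+2*P*t+X*t^2) - K1*(e+2*P*t'+X*t'^2) with hc0def
    have hvan : ∀ b : ℝ, c0 + c1 * (k b) + c2 * (k b)^2 = 0 := by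
      intro b
      have H := hrel a a' b 0
      rw [hQ, hQ, hQ, hQ] at H
      linear_combination H
    obtain ⟨hc2, -, hc0⟩ := quad3 (fun h => (by norm_num : (0:ℝ) ≠ 1) (hk h))
      (fun h => (by norm_num : (0:ℝ) ≠ 2) (hk h))
      (fun h => (by norm_num : (1:ℝ) ≠ 2) (hk h)) (hvan 0) (hvan 1) (hvan 2)
    have hKK : K2 = K1 := by
      have := (mul_eq_zero.mp hc2).resolve_left hY.ne'
      linarith [sub_eq_zero.mp this]
    have hfac : K1 * ((t - t') * (2*P + X*(t+t'))) = 0 := by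
      rw [hc0def, hKK] at hc0
      linear_combination hc0
    have := (mul_eq_zero.mp hfac).resolve_left hK1pos.ne'
    exact (mul_eq_zero.mp this).resolve_left (sub_ne_zero.mpr htt)
  have k1 := key 0 1 (by norm_num)
  have k2 := key 0 2 (by norm_num)
  have : X * (g 1 - g 2) = 0 := by linear_combination k1 - k2
  have h12 : g 1 ≠ g 2 := fun h => (by norm_num : (1:ℝ) ≠ 2) (hg h)
  exact hX.ne' ((mul_eq_zero.mp this).resolve_right (sub_ne_zero.mpr h12))

lemma inj_of_deriv_ne_zero (g : ℝ → ℝ) (hcont : Continuous (deriv g))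
    (hne : ∀ t, deriv g t ≠ 0) : Function.Injective g := by
  rcases lt_or_gt_of_ne (hne 0) with h0 | h0
  · have hall : ∀ t, deriv g t < 0 := by
      intro t
      rcases lt_or_gt_of_ne (hne t) with h | h
      · exact h
      · exfalso
        have h5 := intermediate_value_uIcc (a := 0) (b := t) hcont.continuousOn
        have : (0:ℝ) ∈ Set.uIcc (deriv g 0) (deriv g t) :=
          Set.mem_uIcc.mpr (Or.inl ⟨h0.le, h.le⟩)
        obtain ⟨c, -, hc⟩ := h5 this
        exact hne c hc
    exact (strictAnti_of_deriv_neg hall).injective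
  · have hall : ∀ t, 0 < deriv g t := by
      intro t
      rcases lt_or_gt_of_ne (hne t) with h | h
      · exfalso
        have h5 := intermediate_value_uIcc (a := 0) (b := t) hcont.continuousOn
        have : (0:ℝ) ∈ Set.uIcc (deriv g 0) (deriv g t) :=
          Set.mem_uIcc.mpr (Or.inr ⟨h.le, h0.le⟩)
        obtain ⟨c, -, hc⟩ := h5 this
        exact hne c hc
      · exact h
    exact (strictMono_of_deriv_pos hall).injective

lemma rpow_base_inj {x y p : ℝ} (hx : 0 < x) (hy : 0 < y) (hp : 0 < p)
    (h : x ^ p = y ^ p) : x = y := by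
  rcases lt_trichotomy x y with h' | h' | h'
  · exact absurd h (Real.rpow_lt_rpow hx.le h' hp).ne
  · exact h'
  · exact absurd h.symm (Real.rpow_lt_rpow hy.le h' hp).ne

theorem stmt_4 {n : ℕ} (hn : 2 ≤ n)
    (f : Fin n → ℝ → ℝ) (hf : ∀ i, ContDiff ℝ (⊤ : ℕ∞) (f i))
    (A : Matrix (Fin n) (Fin n) ℝ) (hA : IsUnit A.det)
    (z : (Fin n → ℝ) → ℝ) (hz : ∀ x, z x = ∑ i, f i (A.mulVec x i))
    (K₀ : ℝ)
    (hK : ∀ x : Fin n → ℝ,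
      (hessian z x).det /
        (1 + ∑ i, (fderiv ℝ z x (Pi.single i 1)) ^ 2) ^ (((n : ℝ) + 2) / 2)
        = K₀) :
    K₀ = 0 := by
  by_contra hK0
  have hzz : z = fun x => ∑ i, f i (A.mulVec x i) := funext hz
  subst hzz
  set p : ℝ := ((n : ℝ) + 2) / 2 with hp_def
  have hp : 0 < p := by positivity
  set g : Fin n → ℝ → ℝ := fun k => deriv (f k) with hg_def
  set h : Fin n → ℝ → ℝ := fun k => deriv (deriv (f k)) with hh_def
  have hdetne : A.det ≠ 0 := by
    intro h0; rw [h0] at hA; exact ((by simp at hA : False)).elim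
  -- main equation
  have main : ∀ u : Fin n → ℝ,
      A.det ^ 2 * ∏ k, h k (u k)
        = K₀ * (1 + ∑ j, (∑ k, g k (u k) * A k j) ^ 2) ^ p := by
    intro u
    set x := A⁻¹.mulVec u with hx_def
    have hu : A.mulVec x = u := by
      rw [hx_def, Matrix.mulVec_mulVec, Matrix.mul_nonsing_inv A hA, Matrix.one_mulVec]
    have hW : (0:ℝ) < 1 + ∑ j, (∑ k, g k (u k) * A k j) ^ 2 := by positivity
    have hKx := hK x
    have hfd : ∀ j, fderiv ℝ (fun x => ∑ i, f i (A.mulVec x i)) x (Pi.single j 1)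
        = ∑ k, g k (u k) * A k j := by
      intro j; rw [fderiv_z_single f hf A x j, hu]
    have hdet : (hessian (fun x => ∑ i, f i (A.mulVec x i)) x).det
        = A.det ^ 2 * ∏ k, h k (u k) := by
      rw [det_hessian_z f hf A x, hu]
    rw [hdet] at hKx
    simp only [hfd] at hKx
    rw [div_eq_iff (by exact (Real.rpow_pos_of_pos hW p).ne')] at hKx
    exact hKx
  -- all second derivatives nonvanishing
  have hnz : ∀ k t, h k t ≠ 0 := by
    intro k t hzero
    have := main (Function.update (fun _ => (0:ℝ)) k t)
    rw [Finset.prod_eq_zero (Finset.mem_univ k) (by rw [Function.update_self]; exact hzero),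
      mul_zero] at this
    have hW : (0:ℝ) < 1 + ∑ j, (∑ k', g k' (Function.update (fun _ => (0:ℝ)) k t k') * A k' j) ^ 2 := by
      positivity
    exact hK0 (by
      have := this.symm
      rcases mul_eq_zero.mp this with h' | h'
      · exact h'
      · exact absurd h' (Real.rpow_pos_of_pos hW p).ne')
  have hcont : ∀ k, Continuous (h k) :=
    fun k => ((contDiff_infty_iff_deriv.mp
      ((contDiff_infty_iff_deriv.mp ((hf k).of_le (by simp))).2)).2).continuous
  have hginj : ∀ k, Function.Injective (g k) := by
    intro k
    exact inj_of_deriv_ne_zero (g k) (by exact hcont k) (fun t => hnz k t)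
  -- indices
  have h0n : 0 < n := by omega
  have h1n : 1 < n := by omega
  set i0 : Fin n := ⟨0, h0n⟩ with hi0
  set i1 : Fin n := ⟨1, h1n⟩ with hi1
  have hne01 : i1 ≠ i0 := by simp [hi0, hi1, Fin.ext_iff]
  set s2 : Finset (Fin n) := (Finset.univ.erase i0).erase i1 with hs2
  have hi1mem : i1 ∈ Finset.univ.erase i0 := Finset.mem_erase.mpr ⟨hne01, Finset.mem_univ _⟩
  set c : Fin n → ℝ := fun j => ∑ k ∈ s2, g k 0 * A k j with hc_def
  set C : ℝ := ∏ k ∈ s2, h k 0 with hC_def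
  set U : ℝ → ℝ → (Fin n → ℝ) := fun a b k => if k = i0 then a else if k = i1 then b else 0
    with hU
  have hUi0 : ∀ a b, U a b i0 = a := fun a b => if_pos rfl
  have hUi1 : ∀ a b, U a b i1 = b := fun a b => by
    simp [hU, hne01]
  have hUo : ∀ a b k, k ∈ s2 → U a b k = 0 := by
    intro a b k hk
    have hk1 : k ≠ i1 := (Finset.mem_erase.mp hk).1
    have hk0 : k ≠ i0 := (Finset.mem_erase.mp (Finset.mem_erase.mp hk).2).1
    simp [hU, hk0, hk1]
  have hprod : ∀ a b, ∏ k, h k (U a b k) = h i0 a * (h i1 b * C) := by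
    intro a b
    rw [← Finset.mul_prod_erase Finset.univ _ (Finset.mem_univ i0),
      ← Finset.mul_prod_erase _ _ hi1mem, hUi0, hUi1]
    congr 2
    exact Finset.prod_congr rfl fun k hk => by rw [hUo a b k hk]
  have hsum : ∀ a b j, ∑ k, g k (U a b k) * A k j
      = g i0 a * A i0 j + (g i1 b * A i1 j + c j) := by
    intro a b j
    rw [← Finset.add_sum_erase Finset.univ _ (Finset.mem_univ i0),
      ← Finset.add_sum_erase _ _ hi1mem, hUi0, hUi1]
    congr 2
    exact Finset.sum_congr rfl fun k hk => by rw [hUo a b k hk]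
  set Q : ℝ → ℝ → ℝ := fun t s => 1 + ∑ j, (t * A i0 j + (s * A i1 j + c j)) ^ 2 with hQ_def
  have hQpos : ∀ t s, 0 < Q t s := by intro t s; rw [hQ_def]; positivity
  -- main at U a b
  have main2 : ∀ a b, A.det ^ 2 * (h i0 a * (h i1 b * C))
      = K₀ * (Q (g i0 a) (g i1 b)) ^ p := by
    intro a b
    have := main (U a b)
    rw [hprod] at this
    simp only [hsum] at this
    exact this
  -- the cross relation
  have hrel : ∀ a a' b b', Q (g i0 a) (g i1 b) * Q (g i0 a') (g i1 b')
      = Q (g i0 a) (g i1 b') * Q (g i0 a') (g i1 b) := by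
    intro a a' b b'
    have h1 := main2 a b
    have h2 := main2 a' b'
    have h3 := main2 a b'
    have h4 := main2 a' b
    have e1 : K₀ * K₀ * ((Q (g i0 a) (g i1 b) * Q (g i0 a') (g i1 b')) ^ p)
        = K₀ * K₀ * ((Q (g i0 a) (g i1 b') * Q (g i0 a') (g i1 b)) ^ p) := by
      rw [Real.mul_rpow (hQpos _ _).le (hQpos _ _).le,
        Real.mul_rpow (hQpos _ _).le (hQpos _ _).le]
      calc K₀ * K₀ * (Q (g i0 a) (g i1 b) ^ p * Q (g i0 a') (g i1 b') ^ p)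
          = (K₀ * Q (g i0 a) (g i1 b) ^ p) * (K₀ * Q (g i0 a') (g i1 b') ^ p) := by ring
        _ = (A.det ^ 2 * (h i0 a * (h i1 b * C))) * (A.det ^ 2 * (h i0 a' * (h i1 b' * C))) := by
            rw [h1, h2]
        _ = (A.det ^ 2 * (h i0 a * (h i1 b' * C))) * (A.det ^ 2 * (h i0 a' * (h i1 b * C))) := by
            ring
        _ = (K₀ * Q (g i0 a) (g i1 b') ^ p) * (K₀ * Q (g i0 a') (g i1 b) ^ p) := by
            rw [h3, h4]
        _ = K₀ * K₀ * (Q (g i0 a) (g i1 b') ^ p * Q (g i0 a') (g i1 b) ^ p) := by ring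
    have e2 := mul_left_cancel₀ (mul_ne_zero hK0 hK0) e1
    exact rpow_base_inj (mul_pos (hQpos _ _) (hQpos _ _))
      (mul_pos (hQpos _ _) (hQpos _ _)) hp e2
  -- coefficients
  set X : ℝ := ∑ j, (A i0 j) ^ 2 with hX_def
  set Y : ℝ := ∑ j, (A i1 j) ^ 2 with hY_def
  set Z : ℝ := ∑ j, A i0 j * A i1 j with hZ_def
  set Pc : ℝ := ∑ j, c j * A i0 j with hP_def
  set Rc : ℝ := ∑ j, c j * A i1 j with hR_def
  set E : ℝ := 1 + ∑ j, (c j) ^ 2 with hE_def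
  have hQform : ∀ t s, Q t s = E + 2*Pc*t + 2*Rc*s + X*t^2 + Y*s^2 + 2*Z*(t*s) := by
    intro t s
    simp only [hQ_def]
    have : ∀ j : Fin n, (t * A i0 j + (s * A i1 j + c j)) ^ 2
        = (c j)^2 + (c j * A i0 j) * (2*t) + (c j * A i1 j) * (2*s)
          + (A i0 j)^2 * t^2 + (A i1 j)^2 * s^2 + (A i0 j * A i1 j) * (2*(t*s)) := by
      intro j; ring
    rw [Finset.sum_congr rfl fun j _ => this j]
    simp only [Finset.sum_add_distrib, ← Finset.sum_mul]
    rw [hE_def, hP_def, hR_def, hX_def, hY_def, hZ_def]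
    ring
  have rowpos : ∀ i : Fin n, 0 < ∑ j, (A i j) ^ 2 := by
    intro i
    rcases (Finset.sum_nonneg fun j _ => sq_nonneg (A i j)).lt_or_eq with hlt | heq
    · exact hlt
    · exfalso
      apply hdetne
      apply Matrix.det_eq_zero_of_row_eq_zero i
      intro j
      have := (Finset.sum_eq_zero_iff_of_nonneg fun j _ => sq_nonneg (A i j)).mp heq.symm
      exact pow_eq_zero_iff (n := 2) (by norm_num) |>.mp (this j (Finset.mem_univ j))
  exact sep_contra E Pc Rc X Y Z (rowpos i0) (rowpos i1) (g i0) (g i1)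
    (hginj i0) (hginj i1) Q hQform hQpos hrel
end

section
/- There is no translation hypersurface x_{n+1} = f₁(x₁) + ⋯ + fₙ(xₙ) in ℝ^{n+1} (n ≥ 2, fᵢ smooth) whose Gauss–Kronecker curvature is a nonzero constant; more generally, no affine translation hypersurface z(x) = Σᵢ fᵢ((Ax)ᵢ) with A invertible has nonzero constant Gauss–Kronecker curvature. -/
section Aux

variable {n : ℕ}

noncomputable def rowCLM (A : Matrix (Fin n) (Fin n) ℝ) (k : Fin n) :
    (Fin n → ℝ) →L[ℝ] ℝ :=
  LinearMap.toContinuousLinearMap ((LinearMap.proj k).comp A.mulVecLin)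

lemma hasFDerivAt_comb (A : Matrix (Fin n) (Fin n) ℝ) (g : Fin n → ℝ → ℝ)
    (hg : ∀ k, Differentiable ℝ (g k)) (c : Fin n → ℝ) (x : Fin n → ℝ) :
    HasFDerivAt (fun y => ∑ k, c k * g k (A.mulVec y k))
      (∑ k, (c k * deriv (g k) (A.mulVec x k)) • rowCLM A k) x := by
  apply HasFDerivAt.fun_sum
  intro k _
  have h1 : HasDerivAt (g k) (deriv (g k) (A.mulVec x k)) (A.mulVec x k) :=
    ((hg k) _).hasDerivAt
  have h2 : HasFDerivAt (fun y => A.mulVec y k) (rowCLM A k) x :=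
    (rowCLM A k).hasFDerivAt
  have := (h1.comp_hasFDerivAt x h2).const_mul (c k)
  simpa [mul_smul, Function.comp_def] using this

lemma fderiv_comb (A : Matrix (Fin n) (Fin n) ℝ) (g : Fin n → ℝ → ℝ)
    (hg : ∀ k, Differentiable ℝ (g k)) (c : Fin n → ℝ) (x : Fin n → ℝ) (j : Fin n) :
    fderiv ℝ (fun y => ∑ k, c k * g k (A.mulVec y k)) x (Pi.single j 1) =
      ∑ k, c k * deriv (g k) (A.mulVec x k) * A k j := by
  rw [(hasFDerivAt_comb A g hg c x).fderiv]
  simp [rowCLM, Matrix.mulVec_single, smul_eq_mul]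

lemma grad_z (f : Fin n → ℝ → ℝ) (hf : ∀ i, ContDiff ℝ (⊤ : ℕ∞) (f i))
    (A : Matrix (Fin n) (Fin n) ℝ)
    (z : (Fin n → ℝ) → ℝ) (hz : ∀ x, z x = ∑ i, f i (A.mulVec x i))
    (x : Fin n → ℝ) (j : Fin n) :
    fderiv ℝ z x (Pi.single j 1) = ∑ k, deriv (f k) (A.mulVec x k) * A k j := by
  have : z = fun y => ∑ k, (1:ℝ) * f k (A.mulVec y k) := by
    funext y; simp [hz y]
  rw [this, fderiv_comb A f (fun k => (hf k).differentiable (by simp)) (fun _ => 1) x j]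
  simp

lemma hess_z (f : Fin n → ℝ → ℝ) (hf : ∀ i, ContDiff ℝ (⊤ : ℕ∞) (f i))
    (A : Matrix (Fin n) (Fin n) ℝ)
    (z : (Fin n → ℝ) → ℝ) (hz : ∀ x, z x = ∑ i, f i (A.mulVec x i))
    (x : Fin n → ℝ) (i j : Fin n) :
    hessian z x i j = ∑ k, deriv (deriv (f k)) (A.mulVec x k) * A k i * A k j := by
  have hf' : ∀ k, Differentiable ℝ (deriv (f k)) := fun k =>
    ((contDiff_infty_iff_deriv.mp ((hf k).of_le (by simp))).2).differentiable (by simp)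
  have h1 : (fun y => fderiv ℝ z y (Pi.single j 1)) =
      fun y => ∑ k, A k j * deriv (f k) (A.mulVec y k) := by
    funext y
    rw [grad_z f hf A z hz y j]
    exact Finset.sum_congr rfl fun k _ => by ring
  unfold hessian
  rw [h1, fderiv_comb A (fun k => deriv (f k)) hf' (fun k => A k j) x i]
  exact Finset.sum_congr rfl fun k _ => by ring

lemma det_hess (f : Fin n → ℝ → ℝ) (hf : ∀ i, ContDiff ℝ (⊤ : ℕ∞) (f i))
    (A : Matrix (Fin n) (Fin n) ℝ)
    (z : (Fin n → ℝ) → ℝ) (hz : ∀ x, z x = ∑ i, f i (A.mulVec x i))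
    (x : Fin n → ℝ) :
    (hessian z x).det = A.det ^ 2 * ∏ k, deriv (deriv (f k)) (A.mulVec x k) := by
  have key : hessian z x =
      A.transpose * (Matrix.diagonal (fun k => deriv (deriv (f k)) (A.mulVec x k)) * A) := by
    ext i j
    rw [hess_z f hf A z hz x i j]
    simp only [Matrix.mul_apply, Matrix.transpose_apply, Matrix.diagonal_apply, ite_mul,
      zero_mul, Finset.sum_ite_eq, Finset.mem_univ, if_true]
    exact Finset.sum_congr rfl fun k _ => by ring
  rw [key, Matrix.det_mul, Matrix.det_mul, Matrix.det_transpose, Matrix.det_diagonal]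
  ring

lemma eps_bound (a c : Fin n → ℝ) (ha : ∃ j, a j ≠ 0) :
    ∃ ε > 0, ∀ v : ℝ, ε * (1 + v ^ 2) ≤ 1 + ∑ j, (v * a j + c j) ^ 2 := by
  set na := ∑ j, a j ^ 2 with hna
  set nc := ∑ j, c j ^ 2 with hnc
  set r := ∑ j, a j * c j with hr
  have hCS : r ^ 2 ≤ na * nc := Finset.sum_mul_sq_le_sq_mul_sq _ _ _
  obtain ⟨j0, hj0⟩ := ha
  have hna_pos : 0 < na := by
    apply Finset.sum_pos' (fun j _ => sq_nonneg _)
    exact ⟨j0, Finset.mem_univ _, by positivity⟩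
  have hnc_nonneg : 0 ≤ nc := Finset.sum_nonneg fun j _ => sq_nonneg _
  set ε := min (na / 2) (na / (na + 1 + nc)) with hε
  have hεpos : 0 < ε := by
    apply lt_min (by linarith)
    apply div_pos hna_pos (by linarith)
  refine ⟨ε, hεpos, fun v => ?_⟩
  have hexp : 1 + ∑ j, (v * a j + c j) ^ 2 = na * v ^ 2 + 2 * r * v + (1 + nc) := by
    have h : ∀ j, (v * a j + c j) ^ 2 = v ^ 2 * a j ^ 2 + 2 * v * (a j * c j) + c j ^ 2 :=
      fun j => by ring
    simp_rw [h, Finset.sum_add_distrib, ← Finset.mul_sum]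
    rw [← hna, ← hnc, ← hr]
    ring
  rw [hexp]
  have hp : 0 < na - ε := by
    have : ε ≤ na / 2 := min_le_left _ _
    linarith
  have hq : 0 ≤ 1 + nc - ε := by
    have h1 : ε ≤ na / (na + 1 + nc) := min_le_right _ _
    have h2 : na / (na + 1 + nc) ≤ 1 := by
      rw [div_le_one (by linarith)]; linarith
    linarith
  have hpq : r ^ 2 ≤ (na - ε) * (1 + nc - ε) := by
    have h1 : ε ≤ na / (na + 1 + nc) := min_le_right _ _
    have h3 : ε * (na + 1 + nc) ≤ na := by
      rw [← le_div_iff₀ (by linarith)]; exact h1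
    nlinarith
  nlinarith [sq_nonneg ((na - ε) * v + r), sq_nonneg v]

lemma no_global (s F : ℝ → ℝ) (hs : ∀ t, HasDerivAt s (F t) t)
    (σ c₂ : ℝ) (hσ : σ = 1 ∨ σ = -1) (hc₂ : 0 < c₂)
    (hF : ∀ t, c₂ * (1 + s t ^ 2) ≤ σ * F t) : False := by
  set g : ℝ → ℝ := fun t => σ * Real.arctan (s t) - c₂ * t with hg_def
  have hg : ∀ t, HasDerivAt g (σ * (1 / (1 + s t ^ 2) * F t) - c₂) t := by
    intro t
    have h1 : HasDerivAt (fun t => Real.arctan (s t)) (1 / (1 + s t ^ 2) * F t) t :=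
      (Real.hasDerivAt_arctan (s t)).comp t (hs t)
    simpa [hg_def, mul_comm] using (h1.const_mul σ).fun_sub ((hasDerivAt_id t).const_mul c₂)
  have hmono : Monotone g := by
    apply monotone_of_deriv_nonneg (fun t => (hg t).differentiableAt)
    intro t
    rw [(hg t).deriv]
    have hpos : (0:ℝ) < 1 + s t ^ 2 := by positivity
    have := hF t
    rw [sub_nonneg, one_div, mul_comm ((1 + s t ^ 2)⁻¹), ← mul_assoc, ← div_eq_mul_inv,
      le_div_iff₀ hpos]
    linarith
  have hle := hmono (le_of_lt (show (0:ℝ) < Real.pi / c₂ by positivity))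
  have hπ : c₂ * (Real.pi / c₂) = Real.pi := by field_simp
  have b1 := Real.arctan_lt_pi_div_two (s 0)
  have b2 := Real.neg_pi_div_two_lt_arctan (s 0)
  have b3 := Real.arctan_lt_pi_div_two (s (Real.pi / c₂))
  have b4 := Real.neg_pi_div_two_lt_arctan (s (Real.pi / c₂))
  simp only [hg_def] at hle
  rcases hσ with h | h <;> rw [h] at hle <;> rw [hπ] at hle <;> linarith

end Aux

theorem stmt_6 {n : ℕ} (hn : 2 ≤ n)
    (f : Fin n → ℝ → ℝ) (hf : ∀ i, ContDiff ℝ (⊤ : ℕ∞) (f i))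
    (A : Matrix (Fin n) (Fin n) ℝ) (hA : IsUnit A.det)
    (z : (Fin n → ℝ) → ℝ) (hz : ∀ x, z x = ∑ i, f i (A.mulVec x i))
    (K₀ : ℝ) (hK₀ : K₀ ≠ 0) :
    ¬ (∀ x : Fin n → ℝ,
      (hessian z x).det /
        (1 + ∑ i, (fderiv ℝ z x (Pi.single i 1)) ^ 2) ^ (((n : ℝ) + 2) / 2)
        = K₀) := by
  intro hK
  set e : ℝ := ((n : ℝ) + 2) / 2 with he_def
  set φ : Fin n → ℝ → ℝ := fun k => deriv (f k) with hφ
  set ψ : Fin n → ℝ → ℝ := fun k => deriv (deriv (f k)) with hψ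
  -- the key pointwise equation
  have key : ∀ x : Fin n → ℝ,
      A.det ^ 2 * ∏ k, ψ k (A.mulVec x k) =
        K₀ * (1 + ∑ j, (∑ k, φ k (A.mulVec x k) * A k j) ^ 2) ^ e := by
    intro x
    have hden : (0:ℝ) < 1 + ∑ j, (∑ k, φ k (A.mulVec x k) * A k j) ^ 2 := by
      have : (0:ℝ) ≤ ∑ j, (∑ k, φ k (A.mulVec x k) * A k j) ^ 2 :=
        Finset.sum_nonneg fun j _ => sq_nonneg _
      linarith
    have hdpow : (0:ℝ) < (1 + ∑ j, (∑ k, φ k (A.mulVec x k) * A k j) ^ 2) ^ e :=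
      Real.rpow_pos_of_pos hden e
    have hK' := hK x
    rw [det_hess f hf A z hz x] at hK'
    simp_rw [grad_z f hf A z hz x] at hK'
    rw [div_eq_iff (ne_of_gt hdpow)] at hK'
    rw [hK']
  -- specialize along the line x(t) = A⁻¹ (t e₀)
  have hdet : A.det ≠ 0 := isUnit_iff_ne_zero.mp hA
  have hn0 : 0 < n := by omega
  set i0 : Fin n := ⟨0, hn0⟩ with hi0
  have hAx : ∀ t : ℝ, A.mulVec ((A⁻¹).mulVec (Pi.single i0 t)) = Pi.single i0 t := by
    intro t
    rw [Matrix.mulVec_mulVec, Matrix.mul_nonsing_inv A hA, Matrix.one_mulVec]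
  set s : ℝ → ℝ := φ i0 with hs_def
  set a : Fin n → ℝ := fun j => A i0 j with ha_def
  set c : Fin n → ℝ := fun j => ∑ k ∈ Finset.univ.erase i0, φ k 0 * A k j with hc_def
  set P : ℝ := ∏ k ∈ Finset.univ.erase i0, ψ k 0 with hP_def
  have hprod : ∀ t : ℝ, (∏ k, ψ k ((Pi.single i0 t : Fin n → ℝ) k)) = ψ i0 t * P := by
    intro t
    rw [← Finset.mul_prod_erase Finset.univ _ (Finset.mem_univ i0), Pi.single_eq_same]
    congr 1
    exact Finset.prod_congr rfl fun k hk => by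
      rw [Pi.single_eq_of_ne (Finset.ne_of_mem_erase hk)]
  have hsum : ∀ (t : ℝ) (j : Fin n),
      (∑ k, φ k ((Pi.single i0 t : Fin n → ℝ) k) * A k j) = s t * a j + c j := by
    intro t j
    rw [← Finset.add_sum_erase Finset.univ _ (Finset.mem_univ i0), Pi.single_eq_same]
    congr 1
    exact Finset.sum_congr rfl fun k hk => by
      rw [Pi.single_eq_of_ne (Finset.ne_of_mem_erase hk)]
  set Q : ℝ → ℝ := fun t => 1 + ∑ j, (s t * a j + c j) ^ 2 with hQ_def
  have eqn : ∀ t : ℝ, A.det ^ 2 * (ψ i0 t * P) = K₀ * Q t ^ e := by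
    intro t
    have h := key ((A⁻¹).mulVec (Pi.single i0 t))
    rw [hAx t] at h
    rw [hprod t] at h
    simp_rw [hsum t] at h
    exact h
  have hQ1 : ∀ t, (1:ℝ) ≤ Q t := by
    intro t
    have h : (0:ℝ) ≤ ∑ j, (s t * a j + c j) ^ 2 :=
      Finset.sum_nonneg fun j _ => sq_nonneg _
    rw [hQ_def]; dsimp only; linarith
  have hQpos : ∀ t, (0:ℝ) < Q t := fun t => lt_of_lt_of_le one_pos (hQ1 t)
  have hPne : P ≠ 0 := by
    intro h
    have h0 := eqn 0
    rw [h, mul_zero, mul_zero] at h0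
    exact (mul_ne_zero hK₀ (ne_of_gt (Real.rpow_pos_of_pos (hQpos 0) e))) h0.symm
  have hden : A.det ^ 2 * P ≠ 0 := mul_ne_zero (pow_ne_zero 2 hdet) hPne
  set κ : ℝ := K₀ / (A.det ^ 2 * P) with hκ_def
  have hκ : κ ≠ 0 := div_ne_zero hK₀ hden
  have hψκ : ∀ t, ψ i0 t = κ * Q t ^ e := by
    intro t
    rw [hκ_def, div_mul_eq_mul_div, eq_div_iff hden]
    linear_combination eqn t
  have ha : ∃ j, a j ≠ 0 := by
    by_contra hcon
    push_neg at hcon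
    exact hdet (Matrix.det_eq_zero_of_row_eq_zero i0 fun j => hcon j)
  obtain ⟨ε, hε, hεQ⟩ := eps_bound a c ha
  have he1 : (1:ℝ) ≤ e := by
    rw [he_def]
    have h2 : (2:ℝ) ≤ (n:ℝ) := by exact_mod_cast hn
    linarith
  have hQe : ∀ t, Q t ≤ Q t ^ e := fun t =>
    calc Q t = Q t ^ (1:ℝ) := (Real.rpow_one _).symm
    _ ≤ Q t ^ e := Real.rpow_le_rpow_of_exponent_le (hQ1 t) he1
  set σ : ℝ := if 0 < κ then 1 else -1 with hσ_def
  have hσ : σ = 1 ∨ σ = -1 := by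
    rw [hσ_def]; split_ifs; exacts [Or.inl rfl, Or.inr rfl]
  have hσκ : σ * κ = |κ| := by
    rw [hσ_def]; split_ifs with h
    · rw [abs_of_pos h]; ring
    · rw [abs_of_neg (lt_of_le_of_ne (not_lt.mp h) hκ)]; ring
  have hc₂ : 0 < |κ| * ε := mul_pos (abs_pos.mpr hκ) hε
  have hsderiv : ∀ t, HasDerivAt s (ψ i0 t) t := by
    intro t
    have hd : Differentiable ℝ (deriv (f i0)) :=
      ((contDiff_infty_iff_deriv.mp ((hf i0).of_le (by simp))).2).differentiable (by simp)
    exact (hd t).hasDerivAt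
  apply no_global s (ψ i0) hsderiv σ (|κ| * ε) hσ hc₂
  intro t
  rw [hψκ t, ← mul_assoc, hσκ]
  calc |κ| * ε * (1 + s t ^ 2) = |κ| * (ε * (1 + s t ^ 2)) := by ring
  _ ≤ |κ| * Q t := mul_le_mul_of_nonneg_left (hεQ (s t)) (abs_nonneg _)
  _ ≤ |κ| * Q t ^ e := mul_le_mul_of_nonneg_left (hQe t) (abs_nonneg _)
end

section
/- Let n ≥ 2 and suppose f₁,…,fₙ : ℝ → ℝ are smooth with fᵢ''(t) ≠ 0 for all i and t, A = (a_{ij}) is an invertible n×n real matrix, and the function K(x) = (det A)² ∏ᵢ fᵢ''((Ax)ᵢ) / (1 + Σᵢ (Σⱼ a_{ji} fⱼ'((Ax)ⱼ))²)^{(n+2)/2} is constant in x. Then for all distinct indices p, q one has Σᵢ a_{pi} a_{qi} = 0, i.e. the rows of A are pairwise orthogonal. -/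
open Finset

noncomputable def Sfun {n : ℕ} (A : Matrix (Fin n) (Fin n) ℝ) (g : Fin n → ℝ → ℝ)
    (y : Fin n → ℝ) : ℝ :=
  ∑ i, (∑ j, A j i * g j (y j)) ^ 2

noncomputable def Lfun {n : ℕ} (A : Matrix (Fin n) (Fin n) ℝ) (g : Fin n → ℝ → ℝ)
    (r : Fin n) (y : Fin n → ℝ) : ℝ :=
  ∑ i, A r i * (∑ j, A j i * g j (y j))

lemma sum_update_eq {n : ℕ} (A : Matrix (Fin n) (Fin n) ℝ) (g : Fin n → ℝ → ℝ)
    (y : Fin n → ℝ) (q : Fin n) (t : ℝ) (i : Fin n) :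
    (∑ j, A j i * g j (Function.update y q t j)) =
      A q i * g q t + ∑ j ∈ Finset.univ.erase q, A j i * g j (y j) := by
  rw [← Finset.add_sum_erase _ _ (Finset.mem_univ q), Function.update_self]
  congr 1
  refine Finset.sum_congr rfl fun j hj => ?_
  rw [Function.update_of_ne (Finset.ne_of_mem_erase hj)]

lemma hasDerivAt_L {n : ℕ} (A : Matrix (Fin n) (Fin n) ℝ) (g : Fin n → ℝ → ℝ)
    (q : Fin n) (dgq : ℝ) (y : Fin n → ℝ) (t : ℝ)
    (hg : HasDerivAt (g q) dgq t) (r : Fin n) :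
    HasDerivAt (fun s => Lfun A g r (Function.update y q s))
      ((∑ i, A r i * A q i) * dgq) t := by
  have hfe : (fun s => Lfun A g r (Function.update y q s))
      = fun s => ∑ i, A r i *
        (A q i * g q s + ∑ j ∈ Finset.univ.erase q, A j i * g j (y j)) := by
    funext s
    exact Finset.sum_congr rfl fun i _ => by rw [sum_update_eq]
  rw [hfe]
  have h2 : HasDerivAt
      (fun s => ∑ i, A r i *
        (A q i * g q s + ∑ j ∈ Finset.univ.erase q, A j i * g j (y j)))
      (∑ i, A r i * (A q i * dgq)) t :=
    HasDerivAt.fun_sum fun i _ => (((hg.const_mul (A q i)).add_const _).const_mul (A r i))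
  convert h2 using 1
  rw [Finset.sum_mul]
  exact Finset.sum_congr rfl fun i _ => by ring

lemma hasDerivAt_S {n : ℕ} (A : Matrix (Fin n) (Fin n) ℝ) (g : Fin n → ℝ → ℝ)
    (q : Fin n) (dgq : ℝ) (y : Fin n → ℝ) (t : ℝ)
    (hg : HasDerivAt (g q) dgq t) :
    HasDerivAt (fun s => Sfun A g (Function.update y q s))
      (2 * dgq * Lfun A g q (Function.update y q t)) t := by
  have hfe : (fun s => Sfun A g (Function.update y q s))
      = fun s => ∑ i,
        (A q i * g q s + ∑ j ∈ Finset.univ.erase q, A j i * g j (y j)) ^ 2 := by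
    funext s
    exact Finset.sum_congr rfl fun i _ => by rw [sum_update_eq]
  rw [hfe]
  have h2 : HasDerivAt
      (fun s => ∑ i,
        (A q i * g q s + ∑ j ∈ Finset.univ.erase q, A j i * g j (y j)) ^ 2)
      (∑ i, (2:ℝ) * (A q i * g q t + ∑ j ∈ Finset.univ.erase q, A j i * g j (y j)) ^ (2-1)
        * (A q i * dgq)) t :=
    HasDerivAt.fun_sum fun i _ => ((hg.const_mul (A q i)).add_const _).pow 2
  convert h2 using 1
  rw [Lfun, Finset.mul_sum]
  refine Finset.sum_congr rfl fun i _ => ?_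
  rw [sum_update_eq]
  norm_num
  ring

lemma hasDerivAt_prod {n : ℕ} (h : Fin n → ℝ → ℝ) (p : Fin n) (dhp : ℝ) (y : Fin n → ℝ) (t : ℝ)
    (hh : HasDerivAt (h p) dhp t) :
    HasDerivAt (fun s => ∏ i, h i (Function.update y p s i))
      (dhp * ∏ i ∈ Finset.univ.erase p, h i (y i)) t := by
  have hfe : (fun s => ∏ i, h i (Function.update y p s i))
      = fun s => h p s * ∏ i ∈ Finset.univ.erase p, h i (y i) := by
    funext s
    rw [← Finset.mul_prod_erase _ _ (Finset.mem_univ p), Function.update_self]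
    congr 1
    exact Finset.prod_congr rfl fun i hi => by
      rw [Function.update_of_ne (Finset.ne_of_mem_erase hi)]
  rw [hfe]
  exact hh.mul_const _

theorem stmt_17 {n : ℕ} (hn : 2 ≤ n)
    (f : Fin n → ℝ → ℝ) (hf : ∀ i, ContDiff ℝ (⊤ : ℕ∞) (f i))
    (hf'' : ∀ i, ∀ t : ℝ, deriv (deriv (f i)) t ≠ 0)
    (A : Matrix (Fin n) (Fin n) ℝ) (hA : IsUnit A.det)
    (K₀ : ℝ)
    (hK : ∀ x : Fin n → ℝ,
      A.det ^ 2 * (∏ i, deriv (deriv (f i)) (A.mulVec x i)) /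
        (1 + ∑ i, (∑ j, A j i * deriv (f j) (A.mulVec x j)) ^ 2) ^
          (((n : ℝ) + 2) / 2) = K₀) :
    ∀ p q : Fin n, p ≠ q → (∑ i, A p i * A q i) = 0 := by
  intro p q hpq
  classical
  have hdet : A.det ≠ 0 := hA.ne_zero
  set m : ℝ := ((n : ℝ) + 2) / 2 with hm
  have hm0 : m ≠ 0 := by rw [hm]; positivity
  set g : Fin n → ℝ → ℝ := fun i => deriv (f i) with hgdef
  -- differentiability facts
  have hC1 : ∀ i, ContDiff ℝ (⊤ : ℕ∞) (deriv (f i)) := fun i =>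
    (contDiff_infty_iff_deriv.mp ((hf i).of_le (by simp))).2
  have hC2 : ∀ i, ContDiff ℝ (⊤ : ℕ∞) (deriv (deriv (f i))) := fun i =>
    (contDiff_infty_iff_deriv.mp (hC1 i)).2
  have hgD : ∀ (i : Fin n) (t : ℝ), HasDerivAt (g i) (deriv (deriv (f i)) t) t := fun i t =>
    ((contDiff_infty_iff_deriv.mp (hC1 i)).1 t).hasDerivAt
  have hhD : ∀ (i : Fin n) (t : ℝ),
      HasDerivAt (deriv (deriv (f i))) (deriv (deriv (deriv (f i))) t) t := fun i t =>
    ((contDiff_infty_iff_deriv.mp (hC2 i)).1 t).hasDerivAt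
  have hSnn : ∀ y : Fin n → ℝ, 0 < 1 + Sfun A g y := by
    intro y
    have : 0 ≤ Sfun A g y := Finset.sum_nonneg fun i _ => sq_nonneg _
    linarith
  -- the constancy identity in the y variables
  have key : ∀ y : Fin n → ℝ,
      A.det ^ 2 * (∏ i, deriv (deriv (f i)) (y i)) = K₀ * (1 + Sfun A g y) ^ m := by
    intro y
    have hx := hK (A⁻¹.mulVec y)
    have hAy : A.mulVec (A⁻¹.mulVec y) = y := by
      rw [Matrix.mulVec_mulVec, Matrix.mul_nonsing_inv A hA, Matrix.one_mulVec]
    rw [hAy] at hx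
    have hpow : (0:ℝ) < (1 + Sfun A g y) ^ m := Real.rpow_pos_of_pos (hSnn y) m
    rw [div_eq_iff (ne_of_gt ?_)] at hx
    · calc A.det ^ 2 * (∏ i, deriv (deriv (f i)) (y i))
        = K₀ * (1 + ∑ i, (∑ j, A j i * deriv (f j) (y j)) ^ 2) ^ m := hx
        _ = K₀ * (1 + Sfun A g y) ^ m := by rw [hgdef]; rfl
    · have h0 : (0:ℝ) < (1 + ∑ i, (∑ j, A j i * deriv (f j) (y j)) ^ 2) ^ m := by
        apply Real.rpow_pos_of_pos
        have : 0 ≤ ∑ i, (∑ j, A j i * deriv (f j) (y j)) ^ 2 :=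
          Finset.sum_nonneg fun i _ => sq_nonneg _
        linarith
      exact h0
  -- step (II')
  have step2 : ∀ y : Fin n → ℝ,
      deriv (deriv (deriv (f p))) (y p) * (1 + Sfun A g y)
        = 2 * m * (deriv (deriv (f p)) (y p)) ^ 2 * Lfun A g p y := by
    intro y
    have hF : HasDerivAt
        (fun s => A.det ^ 2 * ∏ i, deriv (deriv (f i)) (Function.update y p s i))
        (A.det ^ 2 * (deriv (deriv (deriv (f p))) (y p)
          * ∏ i ∈ Finset.univ.erase p, deriv (deriv (f i)) (y i))) (y p) :=
      (hasDerivAt_prod (fun i => deriv (deriv (f i))) p _ y (y p) (hhD p (y p))).const_mul _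
    have hS : HasDerivAt (fun s => Sfun A g (Function.update y p s))
        (2 * deriv (deriv (f p)) (y p) * Lfun A g p y) (y p) := by
      have h := hasDerivAt_S A g p (deriv (deriv (f p)) (y p)) y (y p) (hgD p (y p))
      rwa [Function.update_eq_self] at h
    have hG : HasDerivAt (fun s => K₀ * (1 + Sfun A g (Function.update y p s)) ^ m)
        (K₀ * ((2 * deriv (deriv (f p)) (y p) * Lfun A g p y) * m
          * (1 + Sfun A g y) ^ (m - 1))) (y p) := by
      have h1 : HasDerivAt (fun s => 1 + Sfun A g (Function.update y p s))
          (2 * deriv (deriv (f p)) (y p) * Lfun A g p y) (y p) := hS.const_add 1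
      have h2 := h1.rpow_const (p := m) (Or.inl ?_)
      · have h3 := h2.const_mul K₀
        simp only [Function.update_eq_self] at h3
        exact h3
      · rw [Function.update_eq_self]
        exact ne_of_gt (hSnn y)
    have heqf : (fun s => A.det ^ 2 * ∏ i, deriv (deriv (f i)) (Function.update y p s i))
        = (fun s => K₀ * (1 + Sfun A g (Function.update y p s)) ^ m) := by
      funext s
      exact key (Function.update y p s)
    rw [heqf] at hF
    have eqd := hF.unique hG
    have hkey := key y
    rw [← Finset.mul_prod_erase _ _ (Finset.mem_univ p)] at hkey
    have hr : (1 + Sfun A g y) ^ (m - 1) * (1 + Sfun A g y) = (1 + Sfun A g y) ^ m := by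
      rw [Real.rpow_sub_one (ne_of_gt (hSnn y)),
        div_mul_cancel₀ _ (ne_of_gt (hSnn y))]
    have hCp : A.det ^ 2 * (∏ i ∈ Finset.univ.erase p, deriv (deriv (f i)) (y i)) ≠ 0 :=
      mul_ne_zero (pow_ne_zero _ hdet)
        (Finset.prod_ne_zero_iff.mpr fun i _ => hf'' i _)
    apply mul_left_cancel₀ hCp
    linear_combination (1 + Sfun A g y) * eqd
      + (2 * m * deriv (deriv (f p)) (y p) * Lfun A g p y * K₀) * hr
      - (2 * m * deriv (deriv (f p)) (y p) * Lfun A g p y) * hkey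
  -- step (III)
  have step3 : ∀ y : Fin n → ℝ,
      deriv (deriv (deriv (f p))) (y p) * Lfun A g q y
        = m * (deriv (deriv (f p)) (y p)) ^ 2 * (∑ i, A p i * A q i) := by
    intro y
    have heqf : (fun s => deriv (deriv (deriv (f p))) (y p)
          * (1 + Sfun A g (Function.update y q s)))
        = (fun s => 2 * m * (deriv (deriv (f p)) (y p)) ^ 2
          * Lfun A g p (Function.update y q s)) := by
      funext s
      have h2 := step2 (Function.update y q s)
      rwa [Function.update_of_ne hpq] at h2
    have hlhs : HasDerivAt
        (fun s => deriv (deriv (deriv (f p))) (y p) * (1 + Sfun A g (Function.update y q s)))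
        (deriv (deriv (deriv (f p))) (y p)
          * (2 * deriv (deriv (f q)) (y q) * Lfun A g q y)) (y q) := by
      have hS := hasDerivAt_S A g q (deriv (deriv (f q)) (y q)) y (y q) (hgD q (y q))
      rw [Function.update_eq_self] at hS
      exact (hS.const_add 1).const_mul _
    have hrhs : HasDerivAt
        (fun s => 2 * m * (deriv (deriv (f p)) (y p)) ^ 2
          * Lfun A g p (Function.update y q s))
        (2 * m * (deriv (deriv (f p)) (y p)) ^ 2
          * ((∑ i, A p i * A q i) * deriv (deriv (f q)) (y q))) (y q) :=
      (hasDerivAt_L A g q _ y (y q) (hgD q (y q)) p).const_mul _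
    rw [heqf] at hlhs
    have hde := hlhs.unique hrhs
    have hq0 : (2 : ℝ) * deriv (deriv (f q)) (y q) ≠ 0 :=
      mul_ne_zero two_ne_zero (hf'' q _)
    apply mul_left_cancel₀ hq0
    linear_combination hde
  -- step (IV) at y0 = 0
  set y0 : Fin n → ℝ := fun _ => 0 with hy0
  have heqf : (fun s => deriv (deriv (deriv (f p))) (y0 p)
        * Lfun A g q (Function.update y0 q s))
      = (fun _ : ℝ => m * (deriv (deriv (f p)) (y0 p)) ^ 2 * (∑ i, A p i * A q i)) := by
    funext s
    have h3 := step3 (Function.update y0 q s)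
    rwa [Function.update_of_ne hpq] at h3
  have hlhs : HasDerivAt
      (fun s => deriv (deriv (deriv (f p))) (y0 p) * Lfun A g q (Function.update y0 q s))
      (deriv (deriv (deriv (f p))) (y0 p)
        * ((∑ i, A q i * A q i) * deriv (deriv (f q)) (y0 q))) (y0 q) :=
    (hasDerivAt_L A g q _ y0 (y0 q) (hgD q (y0 q)) q).const_mul _
  rw [heqf] at hlhs
  have hz := hlhs.unique (hasDerivAt_const _ _)
  have hBqq : (∑ i, A q i * A q i) ≠ 0 := by
    intro h0
    have hrow : ∀ i, A q i = 0 := fun i =>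
      mul_self_eq_zero.mp
        ((Finset.sum_eq_zero_iff_of_nonneg (fun i _ => mul_self_nonneg (A q i))).mp h0 i
          (Finset.mem_univ i))
    exact hdet (Matrix.det_eq_zero_of_row_eq_zero q hrow)
  have hD3 : deriv (deriv (deriv (f p))) (y0 p) = 0 := by
    rcases mul_eq_zero.mp hz with h | h
    · exact h
    · exact absurd h (mul_ne_zero hBqq (hf'' q _))
  have h3 := step3 y0
  rw [hD3, zero_mul] at h3
  have hmp : m * (deriv (deriv (f p)) (y0 p)) ^ 2 ≠ 0 :=
    mul_ne_zero hm0 (pow_ne_zero _ (hf'' p _))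
  exact ((mul_eq_zero.mp h3.symm).resolve_left hmp)
end
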